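/- Let n ≥ 1 be an integer. Then C(n,1) = 2^{2n}·n!; that is, every f ∈ 𝒟ⁿ([0,1]) that is not identically zero satisfies m_n(f) ≤ 2^{2n}·n! · ∫_0^1 |f(t)| dt, and 2^{2n}·n! is the smallest constant with this property. -/

import Mathlib

open Set Polynomial Nat MeasureTheory ENNReal

/-- `fd 0` belongs to `𝒟ⁿ([a,b])`, with `fd k` its `k`-th derivative: `fd k` exists and is
continuous on `[a,b]` for `0 ≤ k ≤ n-1`, and `fd n` is the derivative of `fd (n-1)` on `(a,b)`. -/
def IsDn (n : ℕ) (a b : ℝ) (fd : ℕ → ℝ → ℝ) : Prop :=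
  (∀ k, k + 1 < n → ∀ x ∈ Set.Icc a b, HasDerivWithinAt (fd k) (fd (k + 1) x) (Set.Icc a b) x) ∧
  ContinuousOn (fd (n - 1)) (Set.Icc a b) ∧
  (∀ x ∈ Set.Ioo a b, HasDerivAt (fd (n - 1)) (fd n x) x)

/-- `m_n(f) = inf_{a<t<b} |f^{(n)}(t)|`. -/
noncomputable def mIoo (n : ℕ) (a b : ℝ) (fd : ℕ → ℝ → ℝ) : ℝ :=
  sInf ((fun t => |fd n t|) '' Set.Ioo a b)

/-- `‖f‖_{p,[a,b]}` for `0 < p < ∞`. -/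
noncomputable def Lp (p a b : ℝ) (f : ℝ → ℝ) : ℝ :=
  (∫ t in a..b, |f t| ^ p) ^ (1 / p)

/-- `‖f‖_{∞,[a,b]}`. -/
noncomputable def Lsup (a b : ℝ) (f : ℝ → ℝ) : ℝ :=
  sSup ((fun t => |f t|) '' Set.Icc a b)

/-- `‖f‖_{p,[a,b]}` for `0 < p ≤ ∞`. -/
noncomputable def pnorm (p : ℝ≥0∞) (a b : ℝ) (f : ℝ → ℝ) : ℝ :=
  if p = ⊤ then Lsup a b f else Lp p.toReal a b f

/-- `D**(n,p,[a,b])`, `p` finite. -/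
noncomputable def Dstar (n : ℕ) (p a b : ℝ) : ℝ :=
  sInf { c | ∃ Q : Polynomial ℝ, Q.Monic ∧ Q.natDegree = n ∧ c = Lp p a b (fun x => Q.eval x) }

/-- `D**(n,∞,[a,b])`. -/
noncomputable def DstarInf (n : ℕ) (a b : ℝ) : ℝ :=
  sInf { c | ∃ Q : Polynomial ℝ, Q.Monic ∧ Q.natDegree = n ∧ c = Lsup a b (fun x => Q.eval x) }

/-- `C(n,p)`, `p` finite. -/
noncomputable def Cnp (n : ℕ) (p : ℝ) : ℝ :=
  sSup { c | ∃ fd : ℕ → ℝ → ℝ, IsDn n 0 1 fd ∧ (∃ x ∈ Set.Icc (0:ℝ) 1, fd 0 x ≠ 0) ∧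
    c = mIoo n 0 1 fd / Lp p 0 1 (fd 0) }

/-- `C(n,∞)`. -/
noncomputable def CnpInf (n : ℕ) : ℝ :=
  sSup { c | ∃ fd : ℕ → ℝ → ℝ, IsDn n 0 1 fd ∧ (∃ x ∈ Set.Icc (0:ℝ) 1, fd 0 x ≠ 0) ∧
    c = mIoo n 0 1 fd / Lsup 0 1 (fd 0) }

/-!
Let `w = 4⁻ⁿ Uₙ(2x - 1)` be the monic shifted Chebyshev polynomial of the second kind. On the
arc `jπ/(n+1) < θ < (j+1)π/(n+1)` of `x = (1 + cos θ)/2` its sign is `(-1)ʲ`, since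
`Uₙ(cos θ) sin θ = sin((n+1)θ)`; integrating `Uᵢ = T'ᵢ₊₁/(i+1)` arc by arc and using
`Tᵢ₊₁(cos θ) = cos((i+1)θ)` shows that `s = sign w` is orthogonal to every polynomial of degree
`< n` and that `∫₀¹ |w| = 4⁻ⁿ`.

Now let `f ∈ 𝒟ⁿ([0,1])` with `m_n(f) = m > 0`. By Darboux, `f⁽ⁿ⁾` has constant sign, say
`f⁽ⁿ⁾ ≥ m`. Let `P` interpolate `f` at the `n` roots of `w`. For `x` not a root, Rolle's theorem
applied `n` times to `f - P - c w`, with `c` chosen so that it also vanishes at `x`, gives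
`f(x) - P(x) = f⁽ⁿ⁾(ξ)/n! · w(x)`, hence `(f - P - (m/n!) w) s ≥ 0` on `[0,1]`. Integrating,
`∫|f| ≥ ∫ f s ≥ ∫ P s + (m/n!) ∫ w s = m/(4ⁿ n!)`. The polynomial `w` itself, with
`w⁽ⁿ⁾ = n!`, attains equality.
-/

theorem Polynomial.iterate_derivative_eq_C_of_natDegree_le {R : Type*} [Semiring R] {p : R[X]}
    {n : ℕ} (hp : p.natDegree ≤ n) : derivative^[n] p = C (n ! * p.coeff n) := by
  ext m
  rw [coeff_iterate_derivative]
  rcases Nat.eq_zero_or_pos m with rfl | hm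
  · rw [zero_add, Nat.descFactorial_self, coeff_C_zero, nsmul_eq_mul]
  · rw [coeff_eq_zero_of_natDegree_lt (by omega), smul_zero, coeff_C, if_neg (by omega)]

theorem Polynomial.integral_eval_derivative (p : ℝ[X]) (a b : ℝ) :
    ∫ x in a..b, (derivative p).eval x = p.eval b - p.eval a :=
  intervalIntegral.integral_eq_sub_of_hasDerivAt (fun x _ => p.hasDerivAt x)
    ((derivative p).continuous.intervalIntegrable a b)

theorem Polynomial.measurable_sign_eval (p : ℝ[X]) :
    Measurable fun x => (SignType.sign (p.eval x) : ℝ) := by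
  have hmono : Monotone fun x : ℝ => (SignType.sign x : ℝ) := by
    intro x y hxy
    rcases lt_trichotomy x 0 with hx | rfl | hx <;> rcases lt_trichotomy y 0 with hy | rfl | hy <;>
      first | (exfalso; linarith) | simp [*]
  exact hmono.measurable.comp p.continuous.measurable

theorem mul_sign_le_abs (x y : ℝ) : x * SignType.sign y ≤ |x| := by
  rcases lt_trichotomy y 0 with hy | rfl | hy <;> simp [*, le_abs_self, neg_le_abs]

theorem ContinuousOn.intervalIntegrable_mul_sign_eval {g : ℝ → ℝ} {a b : ℝ}
    (hg : ContinuousOn g (uIcc a b)) (p : ℝ[X]) :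
    IntervalIntegrable (fun x => g x * SignType.sign (p.eval x)) volume a b := by
  rw [intervalIntegrable_iff] at *
  refine hg.integrableOn_uIcc.mono_set uIoc_subset_uIcc |>.mul_bdd (c := 1)
    (p.measurable_sign_eval.aestronglyMeasurable) (ae_of_all _ fun x => ?_)
  rcases lt_trichotomy (p.eval x) 0 with h | h | h <;> simp [h]

theorem exists_finset_hasDerivAt_eq_zero {a b : ℝ} {g g' : ℝ → ℝ}
    (hg : ContinuousOn g (Icc a b)) (hd : ∀ x ∈ Ioo a b, HasDerivAt g (g' x) x)
    {s : Finset ℝ} (hs : ↑s ⊆ Icc a b) (hz : ∀ x ∈ s, g x = 0) :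
    ∃ t : Finset ℝ, s.card ≤ t.card + 1 ∧ ↑t ⊆ Ioo a b ∧ ∀ x ∈ t, g' x = 0 := by
  have rolle : ∀ x ∈ s, ∀ y ∈ s, x < y → ∃ z ∈ Ioo x y, g' z = 0 := fun x hx y hy hxy =>
    exists_hasDerivAt_eq_zero hxy (hg.mono (Icc_subset_Icc (hs hx).1 (hs hy).2))
      ((hz x hx).trans (hz y hy).symm)
      fun z hz => hd z ⟨(hs hx).1.trans_lt hz.1, hz.2.trans_le (hs hy).2⟩
  choose! c hc using rolle
  set t := ((s ×ˢ s).filter fun p => p.1 < p.2).image fun p => c p.1 p.2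
  have ht : ∀ z ∈ t, ∃ x ∈ s, ∃ y ∈ s, x < y ∧ z = c x y := by
    simp only [t, Finset.mem_image, Finset.mem_filter, Finset.mem_product]
    rintro z ⟨⟨x, y⟩, ⟨⟨hx, hy⟩, hxy⟩, rfl⟩
    exact ⟨x, hx, y, hy, hxy, rfl⟩
  refine ⟨t, Finset.card_le_of_interleaved fun x hx y hy hxy _ => ⟨c x y, ?_, (hc x hx y hy hxy).1⟩,
    fun z hz => ?_, fun z hz => ?_⟩
  · exact Finset.mem_image.2 ⟨(x, y), by simp [hx, hy, hxy], rfl⟩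
  · obtain ⟨x, hx, y, hy, hxy, rfl⟩ := ht z hz
    exact ⟨(hs hx).1.trans_lt (hc x hx y hy hxy).1.1, (hc x hx y hy hxy).1.2.trans_le (hs hy).2⟩
  · obtain ⟨x, hx, y, hy, hxy, rfl⟩ := ht z hz
    exact (hc x hx y hy hxy).2

theorem isDn_iterate_derivative {n : ℕ} (hn : 1 ≤ n) (a b : ℝ) (p : ℝ[X]) :
    IsDn n a b (fun k x => (derivative^[k] p).eval x) := by
  have hderiv (k : ℕ) (x : ℝ) :
      HasDerivAt (fun y => (derivative^[k] p).eval y) ((derivative^[k + 1] p).eval x) x := by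
    rw [Function.iterate_succ_apply']
    exact (derivative^[k] p).hasDerivAt x
  refine ⟨fun k _ x _ => (hderiv k x).hasDerivWithinAt, (derivative^[n - 1] p).continuousOn,
    fun x _ => ?_⟩
  simpa only [Nat.sub_add_cancel hn] using hderiv (n - 1) x

theorem mIoo_iterate_derivative_of_monic {w : ℝ[X]} (hw : w.Monic) {n : ℕ}
    (hdeg : w.natDegree = n) {a b : ℝ} (hab : a < b) :
    mIoo n a b (fun k x => (derivative^[k] w).eval x) = n ! := by
  have hw' : derivative^[n] w = C (n ! : ℝ) := by
    rw [iterate_derivative_eq_C_of_natDegree_le hdeg.le, ← hdeg, hw.coeff_natDegree, mul_one]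
  simp only [mIoo, hw', eval_C, Nat.abs_cast]
  rw [(nonempty_Ioo.2 hab).image_const, csInf_singleton]

namespace IsDn

variable {n : ℕ} {a b : ℝ} {fd gd : ℕ → ℝ → ℝ}

theorem continuousOn (h : IsDn n a b fd) {k : ℕ} (hk : k < n) :
    ContinuousOn (fd k) (Icc a b) := by
  rcases lt_or_ge (k + 1) n with hk' | hk'
  · exact fun x hx => (h.1 k hk' x hx).continuousWithinAt
  · obtain rfl : k = n - 1 := by omega
    exact h.2.1

theorem hasDerivAt (h : IsDn n a b fd) {k : ℕ} (hk : k < n) {x : ℝ} (hx : x ∈ Ioo a b) :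
    HasDerivAt (fd k) (fd (k + 1) x) x := by
  rcases lt_or_ge (k + 1) n with hk' | hk'
  · exact (h.1 k hk' x (Ioo_subset_Icc_self hx)).hasDerivAt (Icc_mem_nhds hx.1 hx.2)
  · obtain rfl : k = n - 1 := by omega
    rw [Nat.sub_add_cancel (by omega)]
    exact h.2.2 x hx

theorem sub (hf : IsDn n a b fd) (hg : IsDn n a b gd) :
    IsDn n a b (fun k x => fd k x - gd k x) :=
  ⟨fun k hk x hx => (hf.1 k hk x hx).sub (hg.1 k hk x hx), hf.2.1.sub hg.2.1,
    fun x hx => (hf.2.2 x hx).sub (hg.2.2 x hx)⟩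

theorem neg (h : IsDn n a b fd) : IsDn n a b (fun k x => -fd k x) :=
  ⟨fun k hk x hx => (h.1 k hk x hx).neg, h.2.1.neg, fun x hx => (h.2.2 x hx).neg⟩

theorem exists_eq_zero_of_card_eq (hn : 1 ≤ n) (h : IsDn n a b fd) {s : Finset ℝ}
    (hcard : s.card = n + 1) (hs : ↑s ⊆ Icc a b) (hz : ∀ x ∈ s, fd 0 x = 0) :
    ∃ ξ ∈ Ioo a b, fd n ξ = 0 := by
  have key : ∀ k < n,
      ∃ t : Finset ℝ, n ≤ t.card + k ∧ ↑t ⊆ Ioo a b ∧ ∀ x ∈ t, fd (k + 1) x = 0 := by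
    intro k hk
    induction k with
    | zero =>
      obtain ⟨t, ht, hts, htz⟩ := exists_finset_hasDerivAt_eq_zero (h.continuousOn hk)
        (fun x hx => h.hasDerivAt hk hx) hs hz
      exact ⟨t, by omega, hts, htz⟩
    | succ k ih =>
      obtain ⟨t, ht, hts, htz⟩ := ih (by omega)
      obtain ⟨t', ht', hts', htz'⟩ := exists_finset_hasDerivAt_eq_zero (h.continuousOn hk)
        (fun x hx => h.hasDerivAt hk hx) (hts.trans Ioo_subset_Icc_self) htz
      exact ⟨t', by omega, hts', htz'⟩
  obtain ⟨t, ht, hts, htz⟩ := key (n - 1) (by omega)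
  obtain ⟨ξ, hξ⟩ : t.Nonempty := Finset.card_pos.1 (by omega)
  exact ⟨ξ, hts hξ, by simpa only [Nat.sub_add_cancel hn] using htz ξ hξ⟩

theorem exists_interpolation_remainder (hn : 1 ≤ n) (h : IsDn n a b fd) {w P : ℝ[X]}
    (hw : w.Monic) (hdeg : w.natDegree = n) {Z : Finset ℝ} (hZ : Z.card = n)
    (hZab : ↑Z ⊆ Icc a b) (hwZ : ∀ z ∈ Z, w.eval z = 0) (hP : P.natDegree < n)
    (hPZ : ∀ z ∈ Z, P.eval z = fd 0 z) {x : ℝ} (hx : x ∈ Icc a b) (hwx : w.eval x ≠ 0) :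
    ∃ ξ ∈ Ioo a b, fd 0 x - P.eval x = fd n ξ / n ! * w.eval x := by
  set c := (fd 0 x - P.eval x) / w.eval x with hc
  set q := P + C c * w
  have hq : derivative^[n] q = C (n ! * c) := by
    rw [iterate_derivative_eq_C_of_natDegree_le, coeff_add, coeff_C_mul,
      coeff_eq_zero_of_natDegree_lt hP, ← hdeg, hw.coeff_natDegree, zero_add, mul_one]
    · refine (natDegree_add_le _ _).trans (max_le hP.le ?_)
      exact natDegree_C_mul_le _ _ |>.trans hdeg.le
  have hxZ : x ∉ Z := fun hxZ => hwx (hwZ x hxZ)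
  obtain ⟨ξ, hξ, hξ0⟩ := (h.sub (isDn_iterate_derivative hn a b q)).exists_eq_zero_of_card_eq hn
    (s := insert x Z) (by rw [Finset.card_insert_of_notMem hxZ, hZ])
    (by simpa [Set.insert_subset_iff] using ⟨hx, hZab⟩) (by
      simp only [Finset.mem_insert, forall_eq_or_imp, Function.iterate_zero_apply, q, eval_add,
        eval_mul, eval_C]
      refine ⟨by rw [hc, div_mul_cancel₀ _ hwx]; ring, fun z hz => ?_⟩
      rw [hPZ z hz, hwZ z hz]
      ring)
  refine ⟨ξ, hξ, ?_⟩
  rw [hq, eval_C, sub_eq_zero] at hξ0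
  rw [hξ0, mul_div_cancel_left₀ _ (by positivity), hc, div_mul_cancel₀ _ hwx]

theorem div_factorial_mul_integral_abs_le (hn : 1 ≤ n) (hab : a ≤ b) (h : IsDn n a b fd)
    {m : ℝ} (hm : ∀ t ∈ Ioo a b, m ≤ fd n t) {w : ℝ[X]} (hw : w.Monic) (hdeg : w.natDegree = n)
    {Z : Finset ℝ} (hZ : Z.card = n) (hZab : ↑Z ⊆ Icc a b) (hwZ : ∀ z ∈ Z, w.eval z = 0)
    (horth : ∀ q : ℝ[X], q.natDegree < n → ∫ x in a..b, q.eval x * SignType.sign (w.eval x) = 0) :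
    m / n ! * ∫ x in a..b, |w.eval x| ≤ ∫ x in a..b, |fd 0 x| := by
  set P := Lagrange.interpolate Z id (fd 0)
  have hP : P.natDegree < n := by
    rcases eq_or_ne P 0 with hP0 | hP0
    · rw [hP0, natDegree_zero]
      omega
    · exact (natDegree_lt_iff_degree_lt hP0).2
        (hZ ▸ Lagrange.degree_interpolate_lt _ (Set.injOn_id _))
  have hPZ (z : ℝ) (hz : z ∈ Z) : P.eval z = fd 0 z :=
    Lagrange.eval_interpolate_at_node _ (Set.injOn_id _) hz
  set s : ℝ → ℝ := fun x => SignType.sign (w.eval x)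
  have hint {g : ℝ → ℝ} (hg : ContinuousOn g (uIcc a b)) :
      IntervalIntegrable (fun x => g x * s x) volume a b :=
    hg.intervalIntegrable_mul_sign_eval w
  have hf : ContinuousOn (fd 0) (uIcc a b) := uIcc_of_le hab ▸ h.continuousOn (by omega)
  have hpt : ∀ x ∈ Icc a b, 0 ≤ (fd 0 x - P.eval x - m / n ! * w.eval x) * s x := by
    intro x hx
    by_cases hwx : w.eval x = 0
    · simp [s, hwx]
    obtain ⟨ξ, hξ, hrem⟩ :=
      h.exists_interpolation_remainder hn hw hdeg hZ hZab hwZ hP hPZ hx hwx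
    have : (fd 0 x - P.eval x - m / n ! * w.eval x) * s x = (fd n ξ - m) / n ! * |w.eval x| := by
      rw [hrem, ← self_mul_sign]
      ring
    rw [this]
    exact mul_nonneg (div_nonneg (sub_nonneg.2 (hm ξ hξ)) (by positivity)) (abs_nonneg _)
  have hsplit : ∫ x in a..b, fd 0 x * s x =
      (∫ x in a..b, (fd 0 x - P.eval x - m / n ! * w.eval x) * s x) +
        (∫ x in a..b, P.eval x * s x) + m / n ! * ∫ x in a..b, w.eval x * s x := by
    have hg : ContinuousOn (fun x => fd 0 x - P.eval x - m / n ! * w.eval x) (uIcc a b) := by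
      fun_prop
    have h1 := hint hg
    have h2 := hint P.continuousOn
    have h3 := (hint w.continuousOn).const_mul (m / n !)
    rw [← intervalIntegral.integral_const_mul, ← intervalIntegral.integral_add h1 h2,
      ← intervalIntegral.integral_add (h1.add h2) h3]
    congr 1 with x
    ring
  calc m / n ! * ∫ x in a..b, |w.eval x| = m / n ! * ∫ x in a..b, w.eval x * s x := by
        simp only [s, self_mul_sign]
    _ ≤ ∫ x in a..b, fd 0 x * s x := by
        rw [hsplit, horth P hP]
        linarith [intervalIntegral.integral_nonneg (μ := volume) hab hpt]
    _ ≤ ∫ x in a..b, |fd 0 x| :=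
        intervalIntegral.integral_mono_on hab (hint hf) hf.abs.intervalIntegrable
          fun x _ => mul_sign_le_abs _ _

theorem forall_le_or_forall_le_neg (h : IsDn n a b fd) {m : ℝ} (hm : 0 < m)
    (habs : ∀ t ∈ Ioo a b, m ≤ |fd n t|) :
    (∀ t ∈ Ioo a b, m ≤ fd n t) ∨ ∀ t ∈ Ioo a b, m ≤ -fd n t := by
  have hne : ∀ t ∈ Ioo a b, fd n t ≠ 0 := fun t ht h0 => by
    simpa [h0] using hm.trans_le (habs t ht)
  rcases hasDerivWithinAt_forall_lt_or_forall_gt_of_forall_ne (convex_Ioo a b)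
    (fun x hx => (h.2.2 x hx).hasDerivWithinAt) hne with hneg | hpos
  · exact .inr fun t ht => (abs_of_neg (hneg t ht)).symm ▸ habs t ht
  · exact .inl fun t ht => (abs_of_pos (hpos t ht)).symm ▸ habs t ht

theorem mIoo_le_abs {t : ℝ} (ht : t ∈ Ioo a b) : mIoo n a b fd ≤ |fd n t| :=
  csInf_le ⟨0, by rintro _ ⟨s, _, rfl⟩; exact abs_nonneg _⟩ ⟨t, ht, rfl⟩

theorem mIoo_div_factorial_mul_integral_abs_le (hn : 1 ≤ n) (hab : a ≤ b) (h : IsDn n a b fd)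
    {w : ℝ[X]} (hw : w.Monic) (hdeg : w.natDegree = n)
    {Z : Finset ℝ} (hZ : Z.card = n) (hZab : ↑Z ⊆ Icc a b) (hwZ : ∀ z ∈ Z, w.eval z = 0)
    (horth : ∀ q : ℝ[X], q.natDegree < n → ∫ x in a..b, q.eval x * SignType.sign (w.eval x) = 0) :
    mIoo n a b fd / n ! * ∫ x in a..b, |w.eval x| ≤ ∫ x in a..b, |fd 0 x| := by
  have hI {g : ℝ → ℝ} : 0 ≤ ∫ x in a..b, |g x| :=
    intervalIntegral.integral_nonneg hab fun x _ => abs_nonneg _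
  rcases le_or_gt (mIoo n a b fd) 0 with hm | hm
  · exact (mul_nonpos_of_nonpos_of_nonneg (div_nonpos_of_nonpos_of_nonneg hm (by positivity))
      hI).trans hI
  rcases h.forall_le_or_forall_le_neg hm fun t ht => mIoo_le_abs ht with hpos | hneg
  · exact h.div_factorial_mul_integral_abs_le hn hab hpos hw hdeg hZ hZab hwZ horth
  · simpa using h.neg.div_factorial_mul_integral_abs_le hn hab hneg hw hdeg hZ hZab hwZ horth

end IsDn

open Real Polynomial.Chebyshev

theorem sum_neg_one_pow_mul_cos_sub_cos {N r : ℕ} (hr : 0 < r) (hrN : r < N) :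
    ∑ j ∈ Finset.range N, (-1 : ℝ) ^ j * (cos (r * (j * π / N)) - cos (r * (↑(j + 1) * π / N))) =
      0 := by
  have hN : (0 : ℝ) < N := by exact_mod_cast hr.trans hrN
  set β := r * π / (2 * N) with hβ
  have hterm (j : ℕ) : cos (r * (j * π / N)) - cos (r * (↑(j + 1) * π / N)) =
      2 * sin β * sin ((2 * j + 1) * β) := by
    rw [show r * (j * π / N) = (2 * j + 1) * β - β by rw [hβ]; field_simp; ring,
      show r * (↑(j + 1) * π / N) = (2 * j + 1) * β + β by rw [hβ]; field_simp; push_cast; ring,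
      cos_sub, cos_add]
    ring
  have htel (j : ℕ) : 2 * cos β * ((-1) ^ j * sin ((2 * j + 1) * β)) =
      (-1) ^ j * sin (2 * j * β) - (-1) ^ (j + 1) * sin (2 * ↑(j + 1) * β) := by
    rw [show 2 * (j : ℝ) * β = (2 * j + 1) * β - β by ring,
      show 2 * ((j + 1 : ℕ) : ℝ) * β = (2 * j + 1) * β + β by push_cast; ring, sin_sub, sin_add,
      pow_succ]
    ring
  have hβ₀ : 0 < β := div_pos (mul_pos (by exact_mod_cast hr) pi_pos) (by positivity)
  have hcos : 0 < cos β := cos_pos_of_mem_Ioo ⟨by linarith [pi_pos], by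
    rw [hβ, div_lt_div_iff₀ (by positivity) two_pos]
    have : (r : ℝ) < N := by exact_mod_cast hrN
    nlinarith [pi_pos]⟩
  have hsum : ∑ j ∈ Finset.range N, (-1 : ℝ) ^ j * sin ((2 * j + 1) * β) = 0 := by
    -- multiplied by `2 cos β` the sum telescopes (`htel`) to `± sin (2 N β) = ± sin (r π) = 0`
    have h := Finset.sum_range_sub' (fun j : ℕ => (-1 : ℝ) ^ j * sin (2 * j * β)) N
    rw [show 2 * (N : ℝ) * β = r * π by rw [hβ]; field_simp, sin_nat_mul_pi] at h
    simp only [← htel, ← Finset.mul_sum, CharP.cast_eq_zero, mul_zero, zero_mul, sin_zero,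
      sub_zero] at h
    exact (mul_eq_zero.1 h).resolve_left (by positivity)
  calc _ = ∑ j ∈ Finset.range N, 2 * sin β * ((-1) ^ j * sin ((2 * j + 1) * β)) := by
        refine Finset.sum_congr rfl fun j _ => ?_
        rw [hterm]
        ring
    _ = 0 := by rw [← Finset.mul_sum, hsum, mul_zero]

theorem sign_eval_U_of_mem_Ioo {n j : ℕ} (hj : j ≤ n) {y : ℝ}
    (hy : y ∈ Ioo (node (n + 1) (j + 1)) (node (n + 1) j)) :
    (SignType.sign ((U ℝ n).eval y) : ℝ) = (-1) ^ j := by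
  have hN : (0 : ℝ) < n + 1 := by positivity
  have hy1 : y ∈ Icc (-1 : ℝ) 1 :=
    ⟨node_mem_Icc.1.trans hy.1.le, hy.2.le.trans node_mem_Icc.2⟩
  have harccos (k : ℕ) (hk : k ≤ n + 1) : arccos (node (n + 1) k) = k * π / (n + 1) := by
    rw [node, arccos_cos (by positivity)]
    · push_cast; rfl
    · rw [div_le_iff₀ (by exact_mod_cast hN)]
      have : (k : ℝ) ≤ n + 1 := by exact_mod_cast hk
      push_cast
      nlinarith [pi_pos]
  set θ := arccos y
  have hθ₁ : j * π / (n + 1) < θ := by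
    rw [← harccos j (by omega)]
    exact arccos_lt_arccos hy1.1 hy.2 node_mem_Icc.2
  have hθ₂ : θ < (j + 1) * π / (n + 1) := by
    rw [show ((j : ℝ) + 1) = ((j + 1 : ℕ) : ℝ) by push_cast; ring, ← harccos (j + 1) (by omega)]
    exact arccos_lt_arccos node_mem_Icc.1 hy.1 hy1.2
  have hsinθ : 0 < sin θ := sin_pos_of_pos_of_lt_pi (lt_of_le_of_lt (by positivity) hθ₁)
    (hθ₂.trans_le (by
      rw [div_le_iff₀ hN]
      have : (j : ℝ) + 1 ≤ n + 1 := by exact_mod_cast Nat.succ_le_succ hj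
      nlinarith [pi_pos]))
  have hsin : 0 < sin ((n + 1) * θ - j * π) := by
    apply sin_pos_of_pos_of_lt_pi
    · rw [div_lt_iff₀ hN] at hθ₁; linarith
    · rw [lt_div_iff₀ hN] at hθ₂; linarith
  have key := U_real_cos θ n
  rw [cos_arccos hy1.1 hy1.2, Int.cast_natCast] at key
  rw [sin_sub_nat_mul_pi, ← key, ← mul_assoc] at hsin
  have hpos : 0 < (-1) ^ j * (U ℝ n).eval y := pos_of_mul_pos_left hsin hsinθ.le
  rcases neg_one_pow_eq_or ℝ j with h | h <;> rw [h] at hpos ⊢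
  · simp [sign_pos (by linarith : 0 < (U ℝ n).eval y)]
  · simp [sign_neg (by linarith : (U ℝ n).eval y < 0)]

theorem integral_mul_sign_eval_U {g : ℝ → ℝ} (hg : Continuous g) (n : ℕ) :
    ∫ y in -1..1, g y * SignType.sign ((U ℝ n).eval y) =
      ∑ j ∈ Finset.range (n + 1), (-1) ^ j * ∫ y in node (n + 1) (j + 1)..node (n + 1) j, g y := by
  have hpiece (j : ℕ) (hj : j ≤ n) :
      ∫ y in node (n + 1) (j + 1)..node (n + 1) j, g y * SignType.sign ((U ℝ n).eval y) =
        (-1) ^ j * ∫ y in node (n + 1) (j + 1)..node (n + 1) j, g y := by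
    rw [← intervalIntegral.integral_const_mul]
    refine intervalIntegral.integral_congr_ae ?_
    filter_upwards [Measure.ae_ne volume (node (n + 1) j)] with y hne hy
    rw [uIoc_of_le (node_lt (by omega) (by omega)).le] at hy
    rw [sign_eval_U_of_mem_Ioo hj ⟨hy.1, hy.2.lt_of_ne hne⟩, mul_comm]
  have hsum := intervalIntegral.sum_integral_adjacent_intervals (a := node (n + 1)) (n := n + 1)
    (μ := volume) fun j _ => hg.continuousOn.intervalIntegrable_mul_sign_eval (U ℝ n)
  rw [node_eq_one, node_eq_neg_one n.succ_ne_zero] at hsum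
  rw [intervalIntegral.integral_symm 1 (-1), ← hsum, ← Finset.sum_neg_distrib]
  refine Finset.sum_congr rfl fun j hj => ?_
  rw [intervalIntegral.integral_symm, neg_neg, hpiece j (by simpa [Nat.lt_succ_iff] using hj)]

theorem integral_eval_U_mul_sign_eval_U (i n : ℕ) :
    ∫ y in -1..1, (U ℝ i).eval y * SignType.sign ((U ℝ n).eval y) =
      (∑ j ∈ Finset.range (n + 1), (-1) ^ j * ((T ℝ (i + 1)).eval (node (n + 1) j) -
        (T ℝ (i + 1)).eval (node (n + 1) (j + 1)))) / (i + 1) := by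
  have hU : ∀ c d : ℝ, ∫ y in c..d, (U ℝ i).eval y =
      ((T ℝ (i + 1)).eval d - (T ℝ (i + 1)).eval c) / (i + 1) := by
    intro c d
    rw [← integral_eval_derivative, T_derivative_eq_U, ← intervalIntegral.integral_div]
    congr 1 with y
    push_cast
    simp only [add_sub_cancel_right, eval_mul, eval_add, eval_natCast, eval_one]
    field_simp
  rw [integral_mul_sign_eval_U (U ℝ i).continuous, Finset.sum_div]
  refine Finset.sum_congr rfl fun j _ => ?_
  rw [hU, mul_div_assoc]

theorem integral_eval_U_mul_sign_eval_U_of_lt {i n : ℕ} (hi : i < n) :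
    ∫ y in -1..1, (U ℝ i).eval y * SignType.sign ((U ℝ n).eval y) = 0 := by
  have hT (k : ℕ) :
      (T ℝ (i + 1)).eval (node (n + 1) k) = cos ((i + 1 : ℕ) * (k * π / (n + 1 : ℕ))) := by
    rw [node, show ((i : ℤ) + 1) = ((i + 1 : ℕ) : ℤ) by push_cast; rfl, T_real_cos,
      Int.cast_natCast]
  rw [integral_eval_U_mul_sign_eval_U]
  simp only [hT]
  rw [sum_neg_one_pow_mul_cos_sub_cos (by omega) (by omega), zero_div]

theorem integral_abs_eval_U (n : ℕ) : ∫ y in -1..1, |(U ℝ n).eval y| = 2 := by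
  have hT (k : ℕ) (hk : k ≤ n + 1) : (T ℝ (n + 1)).eval (node (n + 1) k) = (-1) ^ k := by
    exact_mod_cast eval_T_real_node (Finset.mem_Iic.2 hk)
  simp_rw [← self_mul_sign]
  have hterm : ∀ j ∈ Finset.range (n + 1), (-1 : ℝ) ^ j *
      ((T ℝ (n + 1)).eval (node (n + 1) j) - (T ℝ (n + 1)).eval (node (n + 1) (j + 1))) = 2 := by
    intro j hj
    rw [Finset.mem_range] at hj
    rw [hT j (by omega), hT (j + 1) (by omega), pow_succ]
    rcases neg_one_pow_eq_or ℝ j with h | h <;> rw [h] <;> norm_num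
  rw [integral_eval_U_mul_sign_eval_U, Finset.sum_congr rfl hterm, Finset.sum_const,
    Finset.card_range, nsmul_eq_mul]
  push_cast
  field_simp

noncomputable def chebyshevUsequence : Polynomial.Sequence ℝ where
  elems' i := U ℝ i
  degree_eq' i := degree_U_natCast ℝ i

theorem integral_mul_sign_eval_U_eq_zero {n : ℕ} {q : ℝ[X]} (hq : q.natDegree < n) :
    ∫ y in -1..1, q.eval y * SignType.sign ((U ℝ n).eval y) = 0 := by
  have hmem : q ∈ degreeLT ℝ n :=
    mem_degreeLT.2 (degree_le_natDegree.trans_lt (by exact_mod_cast hq))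
  rw [← chebyshevUsequence.span_degreeLT fun i _ => by simp [chebyshevUsequence]] at hmem
  clear hq
  induction hmem using Submodule.span_induction with
  | mem q hq =>
    obtain ⟨i, hi, rfl⟩ := hq
    exact integral_eval_U_mul_sign_eval_U_of_lt hi
  | zero => simp
  | add q r _ _ hq hr =>
    simp only [eval_add, add_mul]
    rw [intervalIntegral.integral_add, hq, hr, add_zero] <;>
      exact Continuous.continuousOn (by fun_prop) |>.intervalIntegrable_mul_sign_eval _
  | smul c q _ hq =>
    simp only [eval_smul, smul_eq_mul, mul_assoc, intervalIntegral.integral_const_mul, hq, mul_zero]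

noncomputable def monicShiftedU (n : ℕ) : ℝ[X] :=
  C (4 ^ n)⁻¹ * (U ℝ n).comp (C 2 * X + C (-1))

namespace monicShiftedU

theorem eval (n : ℕ) (x : ℝ) : (monicShiftedU n).eval x = (4 ^ n)⁻¹ * (U ℝ n).eval (2 * x - 1) := by
  simp [monicShiftedU, sub_eq_add_neg]

theorem natDegree (n : ℕ) : (monicShiftedU n).natDegree = n := by
  rw [monicShiftedU, natDegree_C_mul (by positivity), natDegree_comp, natDegree_U_natCast,
    natDegree_linear two_ne_zero, mul_one]

theorem monic (n : ℕ) : (monicShiftedU n).Monic := by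
  rw [Monic, monicShiftedU, leadingCoeff_mul, leadingCoeff_C,
    leadingCoeff_comp (by rw [natDegree_linear two_ne_zero]; exact one_ne_zero),
    leadingCoeff_U_natCast, leadingCoeff_linear two_ne_zero, natDegree_U_natCast, ← mul_pow]
  norm_num

theorem sign_eval (n : ℕ) (x : ℝ) :
    SignType.sign ((monicShiftedU n).eval x) = SignType.sign ((U ℝ n).eval (2 * x - 1)) := by
  rw [eval, sign_mul, sign_pos (by positivity), one_mul]

theorem integral_mul_sign_eq_zero {n : ℕ} {q : ℝ[X]} (hq : q.natDegree < n) :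
    ∫ x in (0 : ℝ)..1, q.eval x * SignType.sign ((monicShiftedU n).eval x) = 0 := by
  set r := q.comp (C 2⁻¹ * X + C 2⁻¹)
  have hr : r.natDegree < n := by
    refine natDegree_comp_le.trans_lt ?_
    rwa [natDegree_linear (by norm_num), mul_one]
  have hrq (x : ℝ) : r.eval (2 * x - 1) = q.eval x := by
    simp only [r, eval_comp, eval_add, eval_mul, eval_C, eval_X]
    ring_nf
  simp only [sign_eval, ← hrq]
  rw [intervalIntegral.integral_comp_mul_sub (fun y => r.eval y * SignType.sign ((U ℝ n).eval y))
    two_ne_zero]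
  norm_num [integral_mul_sign_eval_U_eq_zero hr]

theorem integral_abs (n : ℕ) : ∫ x in (0 : ℝ)..1, |(monicShiftedU n).eval x| = (4 ^ n)⁻¹ := by
  simp only [eval, abs_mul, abs_of_pos (by positivity : (0 : ℝ) < (4 ^ n)⁻¹),
    intervalIntegral.integral_const_mul]
  rw [intervalIntegral.integral_comp_mul_sub (fun y => |(U ℝ n).eval y|) two_ne_zero]
  norm_num [integral_abs_eval_U]

theorem exists_roots (n : ℕ) :
    ∃ Z : Finset ℝ, Z.card = n ∧ ↑Z ⊆ Icc (0 : ℝ) 1 ∧ ∀ z ∈ Z, (monicShiftedU n).eval z = 0 := by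
  refine ⟨(Finset.range n).image fun k => (1 + node (n + 1) (k + 1)) / 2, ?_, ?_, ?_⟩
  · rw [Finset.card_image_of_injOn, Finset.card_range]
    intro k hk l hl hkl
    have := (strictAntiOn_node (n + 1)).injOn (x₁ := k + 1) (x₂ := l + 1)
      (by simp only [Finset.coe_range, Set.mem_Iio] at hk ⊢; omega)
      (by simp only [Finset.coe_range, Set.mem_Iio] at hl ⊢; omega) (by simpa using hkl)
    omega
  · simp only [Finset.coe_image, Set.image_subset_iff]
    intro k _
    have := node_mem_Icc (n := n + 1) (i := k + 1)
    exact ⟨by linarith [this.1], by linarith [this.2]⟩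
  · simp only [Finset.mem_image, Finset.mem_range]
    rintro _ ⟨k, hk, rfl⟩
    have hroot : node (n + 1) (k + 1) ∈ (U ℝ n).roots := by
      rw [roots_U_real]
      simp only [Finset.image_val, Multiset.mem_dedup, Multiset.mem_map, Finset.range_val,
        Multiset.mem_range]
      exact ⟨k, hk, by simp [node]⟩
    rw [eval, show 2 * ((1 + node (n + 1) (k + 1)) / 2) - 1 = node (n + 1) (k + 1) by
      ring, (mem_roots (U_ne_zero ℝ n (by omega))).1 hroot, mul_zero]

end monicShiftedU

theorem IsDn.mIoo_le_four_pow_mul_factorial_mul_integral_abs {n : ℕ} {fd : ℕ → ℝ → ℝ} (hn : 1 ≤ n)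
    (h : IsDn n 0 1 fd) : mIoo n 0 1 fd ≤ 4 ^ n * n ! * ∫ t in (0 : ℝ)..1, |fd 0 t| := by
  obtain ⟨Z, hZ, hZab, hwZ⟩ := monicShiftedU.exists_roots n
  have key := h.mIoo_div_factorial_mul_integral_abs_le hn zero_le_one (monicShiftedU.monic n)
    (monicShiftedU.natDegree n) hZ hZab hwZ fun _ hq => monicShiftedU.integral_mul_sign_eq_zero hq
  rw [monicShiftedU.integral_abs] at key
  calc mIoo n 0 1 fd = 4 ^ n * n ! * (mIoo n 0 1 fd / n ! * (4 ^ n)⁻¹) := by field_simp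
    _ ≤ 4 ^ n * n ! * ∫ t in (0 : ℝ)..1, |fd 0 t| := by gcongr

/-- `C(n,1) = 2^{2n} n!`: every not-identically-zero `f ∈ 𝒟ⁿ([0,1])` satisfies
`m_n(f) ≤ 2^{2n} n! · ∫_0^1 |f(t)| dt`, and this constant is smallest. -/
theorem stmt13 (n : ℕ) (hn : 1 ≤ n) :
    (∀ fd : ℕ → ℝ → ℝ, IsDn n 0 1 fd → (∃ x ∈ Set.Icc (0:ℝ) 1, fd 0 x ≠ 0) →
      mIoo n 0 1 fd ≤ 2 ^ (2 * n) * (n ! : ℝ) * ∫ t in (0:ℝ)..1, |fd 0 t|) ∧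
    (∀ C : ℝ, (∀ fd : ℕ → ℝ → ℝ, IsDn n 0 1 fd → (∃ x ∈ Set.Icc (0:ℝ) 1, fd 0 x ≠ 0) →
        mIoo n 0 1 fd ≤ C * ∫ t in (0:ℝ)..1, |fd 0 t|) →
      (2 ^ (2 * n) * (n ! : ℝ)) ≤ C) := by
  have hpow : (2 : ℝ) ^ (2 * n) = 4 ^ n := by rw [pow_mul]; norm_num
  rw [hpow]
  refine ⟨fun fd h _ => h.mIoo_le_four_pow_mul_factorial_mul_integral_abs hn, fun C hC => ?_⟩
  have hne : ∃ x ∈ Icc (0 : ℝ) 1, (monicShiftedU n).eval x ≠ 0 :=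
    ⟨1, right_mem_Icc.2 zero_le_one, by
      rw [monicShiftedU.eval, show (2 : ℝ) * 1 - 1 = 1 by norm_num, U_eval_one]
      positivity⟩
  have key := hC _ (isDn_iterate_derivative hn 0 1 (monicShiftedU n)) hne
  rw [mIoo_iterate_derivative_of_monic (monicShiftedU.monic n) (monicShiftedU.natDegree n)
    zero_lt_one, Function.iterate_zero_apply, monicShiftedU.integral_abs,
    ← div_le_iff₀ (by positivity), div_inv_eq_mul] at key
  linarith
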